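/- Let G be a finite simple graph, let k ≥ 1, and let H₁, …, Hₖ be subgraphs of G such that for each i the coercion of Hᵢ to a simple graph is a tree (connected and acyclic) and a common vertex r belongs to every Hᵢ. Let I = ⋃ᵢ ({r} ∪ {v ∈ Hᵢ.verts : the degree of v in Hᵢ is at least 2}). Then the subgraph of the supremum ⨆ᵢ Hᵢ induced on the vertex set I is connected. -/

import Mathlib

open SimpleGraph

private lemma aux_reach {V : Type*} [Fintype V] {G : SimpleGraph V} {k : ℕ}
    (H : Fin k → G.Subgraph) (r : V) (hr : ∀ i, r ∈ (H i).verts) (i : Fin k)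
    (hrI : r ∈ ⋃ j, ({r} ∪ {v ∈ (H j).verts | 2 ≤ ((H j).neighborSet v).ncard})) :
    ∀ {a b : (H i).verts} (p : (H i).coe.Walk a b), p.IsPath → b = ⟨r, hr i⟩ →
      ∀ (ha : a.val ∈ ⋃ j, ({r} ∪ {v ∈ (H j).verts | 2 ≤ ((H j).neighborSet v).ncard})),
      ((⨆ j, H j).induce
        (⋃ j, ({r} ∪ {v ∈ (H j).verts | 2 ≤ ((H j).neighborSet v).ncard}))).coe.Reachable
        ⟨a.val, ha⟩ ⟨r, hrI⟩ := by
  intro a b p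
  induction p with
  | nil =>
    intro _ hb ha
    subst hb
    exact Reachable.refl _
  | @cons a w b h p ih =>
    intro hpath hb ha
    have hwI : w.val ∈ ⋃ j, ({r} ∪ {v ∈ (H j).verts | 2 ≤ ((H j).neighborSet v).ncard}) := by
      cases p with
      | nil =>
        subst hb
        exact Set.mem_iUnion.2 ⟨i, Or.inl rfl⟩
      | @cons w u b h' p'' =>
        refine Set.mem_iUnion.2 ⟨i, Or.inr ⟨w.2, ?_⟩⟩
        have hau : a ≠ u := by
          intro he
          have hns := (SimpleGraph.Walk.cons_isPath_iff _ _).1 hpath |>.2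
          apply hns
          rw [he]
          simp [SimpleGraph.Walk.support_cons, p''.start_mem_support]
        have h1 : a.val ∈ (H i).neighborSet w.val := h.symm
        have h2 : u.val ∈ (H i).neighborSet w.val := h'
        have : 1 < ((H i).neighborSet w.val).ncard := by
          rw [Set.one_lt_ncard_iff (Set.toFinite _)]
          exact ⟨a.val, u.val, h1, h2, fun he => hau (Subtype.ext he)⟩
        omega
    have hadj : ((⨆ j, H j).induce
        (⋃ j, ({r} ∪ {v ∈ (H j).verts | 2 ≤ ((H j).neighborSet v).ncard}))).coe.Adj
        ⟨a.val, ha⟩ ⟨w.val, hwI⟩ := by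
      show ((⨆ j, H j).induce _).Adj _ _
      rw [Subgraph.induce_adj]
      exact ⟨ha, hwI, Subgraph.iSup_adj.2 ⟨i, h⟩⟩
    exact hadj.reachable.trans (ih hpath.of_cons hb hwI)

/-- If `H 1, …, H k` (`k ≥ 1`) are subgraphs of a finite graph `G`, each of
which is a tree, all containing a common vertex `r`, and
`I = ⋃ i, ({r} ∪ {v ∈ (H i).verts | degree of v in H i ≥ 2})`, then the subgraph of
`⨆ i, H i` induced on `I` is connected. -/
theorem stmt_9 {V : Type*} [Fintype V] (G : SimpleGraph V)
    (k : ℕ) (hk : 1 ≤ k) (H : Fin k → G.Subgraph) (r : V)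
    (htree : ∀ i, (H i).coe.IsTree)
    (hr : ∀ i, r ∈ (H i).verts) :
    ((⨆ i, H i).induce
      (⋃ i, ({r} ∪ {v ∈ (H i).verts | 2 ≤ ((H i).neighborSet v).ncard}))).Connected := by
  classical
  have i0 : Fin k := ⟨0, hk⟩
  have hrI : r ∈ ⋃ j, ({r} ∪ {v ∈ (H j).verts | 2 ≤ ((H j).neighborSet v).ncard}) :=
    Set.mem_iUnion.2 ⟨i0, Or.inl rfl⟩
  rw [Subgraph.connected_iff']
  rw [SimpleGraph.connected_iff]
  constructor
  · intro x y
    have key : ∀ z : ((⨆ j, H j).induce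
        (⋃ j, ({r} ∪ {v ∈ (H j).verts | 2 ≤ ((H j).neighborSet v).ncard}))).verts,
        ((⨆ j, H j).induce
          (⋃ j, ({r} ∪ {v ∈ (H j).verts | 2 ≤ ((H j).neighborSet v).ncard}))).coe.Reachable
          z ⟨r, hrI⟩ := by
      intro z
      obtain ⟨i, hz⟩ := Set.mem_iUnion.1 z.2
      rcases hz with hz | hz
      · have : z = ⟨r, hrI⟩ := Subtype.ext hz
        rw [this]
      · obtain ⟨w⟩ := ((htree i).isConnected).preconnected ⟨z.val, hz.1⟩ ⟨r, hr i⟩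
        have := aux_reach H r hr i hrI w.toPath.1 w.toPath.2 rfl z.2
        exact this
    exact (key x).trans (key y).symm
  · exact ⟨⟨r, hrI⟩⟩
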